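/- arXiv:1801.04575 — 2 statements merged into one kernel-verified Lean document; each statement's English description precedes it below -/
import Mathlib

section
/- The metric space (Δ⁺, d_L) is compact, and hence complete. -/
open Set Filter Topology

/-- A distance distribution function: nondecreasing, left-continuous,
with values in `[0,1]`, and vanishing on `(-∞, 0]`. -/
def IsDDF (F : ℝ → ℝ) : Prop :=
  Monotone F ∧ (∀ x : ℝ, ContinuousWithinAt F (Set.Iio x) x) ∧
    (∀ x, 0 ≤ F x ∧ F x ≤ 1) ∧ ∀ x ≤ 0, F x = 0

/-- The condition `(F, G; h)` in the definition of the modified Lévy distance. -/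
def LevyCond (F G : ℝ → ℝ) (h : ℝ) : Prop :=
  ∀ x ∈ Set.Ioo (-(1 / h)) (1 / h), F (x - h) - h ≤ G x ∧ G x ≤ F (x + h) + h

/-- The modified Lévy distance on `Δ⁺`. -/
noncomputable def dL (F G : ℝ → ℝ) : ℝ :=
  sInf {h : ℝ | h ∈ Set.Ioc (0 : ℝ) 1 ∧ LevyCond F G h ∧ LevyCond G F h}

/-- The distribution function `H₀`, equal to `0` on `(-∞, 0]` and `1` on `(0, ∞)`. -/
noncomputable def H0 : ℝ → ℝ := fun x => if x ≤ 0 then 0 else 1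

/-! Helly's selection principle. By Tychonoff, a subsequence of any sequence of d.d.f.'s converges
at every rational point to a nondecreasing `g : ℚ → [0,1]`; its left-continuous regularisation
`G x = sup {g q | q < x}` is a d.d.f. On the window `(-1/h, 1/h)` finitely many rationals of mesh
`< h` suffice, and once the subsequence is `h`-close to `g` at those, monotonicity gives both
`(F, G; h)` and `(G, F; h)`. Hence `Δ⁺` is sequentially compact, so compact, so complete. -/

def levySet (F G : ℝ → ℝ) : Set ℝ :=
  {h : ℝ | h ∈ Ioc (0 : ℝ) 1 ∧ LevyCond F G h ∧ LevyCond G F h}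

section LevyDistance

variable {F G K : ℝ → ℝ} {h h' a b : ℝ}

lemma dL_eq_sInf_levySet (F G : ℝ → ℝ) : dL F G = sInf (levySet F G) := rfl

lemma levySet_comm (F G : ℝ → ℝ) : levySet F G = levySet G F := by
  ext h
  exact and_congr_right fun _ => and_comm

lemma dL_comm (F G : ℝ → ℝ) : dL F G = dL G F := by
  rw [dL_eq_sInf_levySet, levySet_comm, dL_eq_sInf_levySet]

lemma dL_nonneg (F G : ℝ → ℝ) : 0 ≤ dL F G :=
  Real.sInf_nonneg fun _ hh => hh.1.1.le

lemma dL_le_of_mem (hh : h ∈ levySet F G) : dL F G ≤ h :=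
  csInf_le ⟨0, fun _ hh' => hh'.1.1.le⟩ hh

lemma levyCond_one (hF : ∀ x, F x ∈ Icc (0 : ℝ) 1) (hG : ∀ x, G x ∈ Icc (0 : ℝ) 1) :
    LevyCond F G 1 := fun x _ =>
  ⟨by linarith [(hF (x - 1)).2, (hG x).1], by linarith [(hG x).2, (hF (x + 1)).1]⟩

lemma one_mem_levySet (hF : ∀ x, F x ∈ Icc (0 : ℝ) 1) (hG : ∀ x, G x ∈ Icc (0 : ℝ) 1) :
    (1 : ℝ) ∈ levySet F G :=
  ⟨right_mem_Ioc.2 one_pos, levyCond_one hF hG, levyCond_one hG hF⟩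

lemma dL_le_one (hF : ∀ x, F x ∈ Icc (0 : ℝ) 1) (hG : ∀ x, G x ∈ Icc (0 : ℝ) 1) :
    dL F G ≤ 1 :=
  dL_le_of_mem (one_mem_levySet hF hG)

lemma Monotone.levyCond_self (hF : Monotone F) (hh : 0 ≤ h) : LevyCond F F h := fun x _ =>
  ⟨by linarith [hF (by linarith : x - h ≤ x)], by linarith [hF (by linarith : x ≤ x + h)]⟩

lemma Monotone.dL_self (hF : Monotone F) : dL F F = 0 := by
  have hset : levySet F F = Ioc 0 1 := by
    ext h
    exact ⟨And.left, fun hh => ⟨hh, hF.levyCond_self hh.1.le, hF.levyCond_self hh.1.le⟩⟩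
  rw [dL_eq_sInf_levySet, hset, csInf_Ioc one_pos]

lemma LevyCond.trans (hFG : LevyCond F G h) (hGK : LevyCond G K h') (hh : 0 < h) (hh' : 0 < h')
    (hsum : h + h' ≤ 1) : LevyCond F K (h + h') := by
  rintro x ⟨hx₁, hx₂⟩
  -- the window of `(F, G; h)` still contains `x ± h'`, since `h (h + h') ≤ 1`
  have hwide : 1 / (h + h') + h' ≤ 1 / h := by
    have hdiff : 1 / h - 1 / (h + h') = h' / (h * (h + h')) := by field_simp; ring
    have : h' ≤ h' / (h * (h + h')) := le_div_self hh'.le (by positivity) (by nlinarith)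
    linarith
  have hnarrow : 1 / (h + h') ≤ 1 / h' := one_div_le_one_div_of_le hh' (by linarith)
  obtain ⟨hGK₁, hGK₂⟩ := hGK x ⟨by linarith, by linarith⟩
  obtain ⟨hFG₁, -⟩ := hFG (x - h') ⟨by linarith, by linarith⟩
  obtain ⟨-, hFG₂⟩ := hFG (x + h') ⟨by linarith, by linarith⟩
  constructor
  · rw [show x - (h + h') = x - h' - h by ring]; linarith
  · rw [show x + (h + h') = x + h' + h by ring]; linarith

lemma dL_lt_add_of_lt_of_lt (hF : ∀ x, F x ∈ Icc (0 : ℝ) 1) (hG : ∀ x, G x ∈ Icc (0 : ℝ) 1)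
    (hK : ∀ x, K x ∈ Icc (0 : ℝ) 1) (ha : dL F G < a) (hb : dL G K < b) (hab : a + b ≤ 1) :
    dL F K < a + b := by
  obtain ⟨h, ⟨⟨hh, -⟩, hFG, hGF⟩, hha⟩ := exists_lt_of_csInf_lt ⟨1, one_mem_levySet hF hG⟩ ha
  obtain ⟨h', ⟨⟨hh', -⟩, hGK, hKG⟩, hh'b⟩ := exists_lt_of_csInf_lt ⟨1, one_mem_levySet hG hK⟩ hb
  have hsum : h + h' ≤ 1 := by linarith
  have hmem : h + h' ∈ levySet F K :=
    ⟨⟨by positivity, hsum⟩, hFG.trans hGK hh hh' hsum,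
      add_comm h h' ▸ hKG.trans hGF hh' hh (by linarith)⟩
  exact (dL_le_of_mem hmem).trans_lt (by linarith)

lemma dL_triangle (hF : ∀ x, F x ∈ Icc (0 : ℝ) 1) (hG : ∀ x, G x ∈ Icc (0 : ℝ) 1)
    (hK : ∀ x, K x ∈ Icc (0 : ℝ) 1) : dL F K ≤ dL F G + dL G K := by
  rcases le_or_gt 1 (dL F G + dL G K) with hge | hlt
  · exact (dL_le_one hF hK).trans hge
  refine le_of_forall_pos_lt_add fun ε hε => ?_
  obtain ⟨δ, hδ, hδε, hδ1⟩ : ∃ δ > 0, 2 * δ ≤ ε ∧ 2 * δ ≤ 1 - (dL F G + dL G K) :=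
    ⟨min ε (1 - (dL F G + dL G K)) / 2, half_pos (lt_min hε (sub_pos.2 hlt)),
      by linarith [min_le_left ε (1 - (dL F G + dL G K))],
      by linarith [min_le_right ε (1 - (dL F G + dL G K))]⟩
  calc dL F K < (dL F G + δ) + (dL G K + δ) :=
        dL_lt_add_of_lt_of_lt hF hG hK (by linarith) (by linarith) (by linarith)
    _ ≤ dL F G + dL G K + ε := by linarith

end LevyDistance

lemma exists_finset_rat_net (a b : ℝ) {r : ℝ} (hr : 0 < r) :
    ∃ S : Finset ℚ, ∀ t ∈ Icc a b, ∃ q ∈ S, t < q ∧ (q : ℝ) < t + r := by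
  obtain ⟨S, hS⟩ := isCompact_Icc.elim_finite_subcover (fun q : ℚ => Ioo ((q : ℝ) - r) q)
    (fun _ => isOpen_Ioo) fun t _ => by
      obtain ⟨q, hq₁, hq₂⟩ := exists_rat_btwn (lt_add_of_pos_right t hr)
      exact mem_iUnion.2 ⟨q, by linarith, hq₁⟩
  refine ⟨S, fun t ht => ?_⟩
  obtain ⟨q, hqS, hq₁, hq₂⟩ := mem_iUnion₂.1 (hS ht)
  exact ⟨q, hqS, hq₂, by linarith⟩

lemma mem_levySet_of_rat_close {F G : ℝ → ℝ} {g : ℚ → ℝ} {ε : ℝ} {S : Finset ℚ}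
    (hF : Monotone F) (hgG : ∀ (q : ℚ) (x : ℝ), q < x → g q ≤ G x)
    (hGg : ∀ (q : ℚ) (x : ℝ), x < q → G x ≤ g q) (hε : ε ∈ Ioc 0 1)
    (hS : ∀ t ∈ Icc (-(1 / ε) - ε) (1 / ε), ∃ q ∈ S, t < q ∧ (q : ℝ) < t + ε)
    (hclose : ∀ q ∈ S, |F q - g q| < ε) : ε ∈ levySet F G := by
  have hnear : ∀ x ∈ Ioo (-(1 / ε)) (1 / ε),
      (∃ q : ℚ, x - ε < q ∧ (q : ℝ) < x ∧ |F q - g q| < ε) ∧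
      (∃ q : ℚ, x < q ∧ (q : ℝ) < x + ε ∧ |F q - g q| < ε) := by
    rintro x ⟨hx₁, hx₂⟩
    obtain ⟨q₁, hq₁S, hq₁l, hq₁r⟩ := hS (x - ε) ⟨by linarith, by linarith [hε.1]⟩
    obtain ⟨q₂, hq₂S, hq₂l, hq₂r⟩ := hS x ⟨by linarith [hε.1], hx₂.le⟩
    exact ⟨⟨q₁, hq₁l, by linarith, hclose q₁ hq₁S⟩, ⟨q₂, hq₂l, hq₂r, hclose q₂ hq₂S⟩⟩
  refine ⟨hε, fun x hx => ?_, fun x hx => ?_⟩ <;>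
    obtain ⟨⟨q₁, hq₁l, hq₁r, hq₁c⟩, ⟨q₂, hq₂l, hq₂r, hq₂c⟩⟩ := hnear x hx <;>
    rw [abs_lt] at hq₁c hq₂c
  · exact ⟨by linarith [hF hq₁l.le, hgG q₁ x hq₁r], by linarith [hGg q₂ x hq₂l, hF hq₂r.le]⟩
  · exact ⟨by linarith [hGg q₁ (x - ε) hq₁l, hF hq₁r.le],
      by linarith [hF hq₂l.le, hgG q₂ (x + ε) hq₂r]⟩

lemma tendsto_dL_of_tendsto_rat {F : ℕ → ℝ → ℝ} {g : ℚ → ℝ} {G : ℝ → ℝ}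
    (hF : ∀ n, Monotone (F n)) (hlim : ∀ q : ℚ, Tendsto (fun n => F n q) atTop (𝓝 (g q)))
    (hgG : ∀ (q : ℚ) (x : ℝ), q < x → g q ≤ G x) (hGg : ∀ (q : ℚ) (x : ℝ), x < q → G x ≤ g q) :
    Tendsto (fun n => dL (F n) G) atTop (𝓝 0) := by
  have hsmall : ∀ ε ∈ Ioc (0 : ℝ) 1, ∀ᶠ n in atTop, dL (F n) G ≤ ε := by
    intro ε hε
    obtain ⟨S, hS⟩ := exists_finset_rat_net (-(1 / ε) - ε) (1 / ε) hε.1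
    have hclose : ∀ᶠ n in atTop, ∀ q ∈ S, |F n q - g q| < ε :=
      (eventually_all_finset S).2 fun q _ => Metric.tendsto_nhds.1 (hlim q) ε hε.1
    exact hclose.mono fun n hn => dL_le_of_mem (mem_levySet_of_rat_close (hF n) hgG hGg hε hS hn)
  refine tendsto_order.2 ⟨fun a ha => .of_forall fun n => ha.trans_le (dL_nonneg _ _),
    fun a ha => ?_⟩
  exact (hsmall (min (a / 2) 1) ⟨by positivity, min_le_right _ _⟩).mono fun n hn =>
    hn.trans_lt ((min_le_left _ _).trans_lt (half_lt_self ha))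

noncomputable def ratLeftLim (g : ℚ → ℝ) (x : ℝ) : ℝ :=
  sSup (g '' {q : ℚ | (q : ℝ) < x})

lemma nonempty_image_rat_lt (g : ℚ → ℝ) (x : ℝ) : (g '' {q : ℚ | (q : ℝ) < x}).Nonempty :=
  let ⟨q, hq⟩ := exists_rat_lt x
  ⟨g q, q, hq, rfl⟩

lemma le_ratLeftLim {g : ℚ → ℝ} (hg : BddAbove (range g)) {q : ℚ} {x : ℝ} (hqx : (q : ℝ) < x) :
    g q ≤ ratLeftLim g x :=
  le_csSup (hg.mono (image_subset_range _ _)) ⟨q, hqx, rfl⟩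

lemma ratLeftLim_le {g : ℚ → ℝ} (hg : Monotone g) {q : ℚ} {x : ℝ} (hxq : x ≤ q) :
    ratLeftLim g x ≤ g q :=
  csSup_le (nonempty_image_rat_lt g x) <| forall_mem_image.2 fun _ hq' =>
    hg (Rat.cast_le.1 ((lt_of_lt_of_le hq' hxq).le))

lemma isDDF_ratLeftLim {g : ℚ → ℝ} (hg : Monotone g) (hg01 : ∀ q, g q ∈ Icc (0 : ℝ) 1)
    (hg0 : g 0 = 0) : IsDDF (ratLeftLim g) := by
  have hbdd : BddAbove (range g) := ⟨1, forall_mem_range.2 fun q => (hg01 q).2⟩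
  have hmono : Monotone (ratLeftLim g) := by
    intro x y hxy
    rcases hxy.eq_or_lt with rfl | hlt
    · rfl
    obtain ⟨q, hxq, hqy⟩ := exists_rat_btwn hlt
    exact (ratLeftLim_le hg hxq.le).trans (le_ratLeftLim hbdd hqy)
  have hnonneg : ∀ x, 0 ≤ ratLeftLim g x := fun x =>
    let ⟨q, hq⟩ := exists_rat_lt x
    (hg01 q).1.trans (le_ratLeftLim hbdd hq)
  refine ⟨hmono, fun x => ?_, fun x => ⟨hnonneg x, ?_⟩, fun x hx => ?_⟩
  · rw [hmono.continuousWithinAt_Iio_iff_leftLim_eq]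
    refine le_antisymm (hmono.leftLim_le le_rfl)
      (csSup_le (nonempty_image_rat_lt g x) (forall_mem_image.2 fun q hq => ?_))
    obtain ⟨y, hqy, hyx⟩ := exists_between (show (q : ℝ) < x from hq)
    exact (le_ratLeftLim hbdd hqy).trans (hmono.le_leftLim hyx)
  · obtain ⟨q, hq⟩ := exists_rat_gt x
    exact (ratLeftLim_le hg hq.le).trans (hg01 q).2
  · exact le_antisymm ((ratLeftLim_le hg (by simpa using hx)).trans hg0.le) (hnonneg x)

lemma exists_subseq_tendsto_on_rat (F : ℕ → ℝ → ℝ) (hF : ∀ n x, F n x ∈ Icc (0 : ℝ) 1) :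
    ∃ g : ℚ → ℝ, ∃ φ : ℕ → ℕ, StrictMono φ ∧
      ∀ q : ℚ, Tendsto (fun n => F (φ n) q) atTop (𝓝 (g q)) := by
  obtain ⟨L, -, φ, hφ, hL⟩ := isCompact_univ.tendsto_subseq
    (x := fun n (q : ℚ) => (⟨F n q, hF n q⟩ : Icc (0 : ℝ) 1)) fun _ => mem_univ _
  exact ⟨fun q => L q, φ, hφ, fun q =>
    (continuous_subtype_val.tendsto _).comp (tendsto_pi_nhds.1 hL q)⟩

lemma exists_subseq_tendsto_dL (F : ℕ → ℝ → ℝ) (hF : ∀ n, IsDDF (F n)) :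
    ∃ G : ℝ → ℝ, IsDDF G ∧ ∃ φ : ℕ → ℕ, StrictMono φ ∧
      Tendsto (fun n => dL (F (φ n)) G) atTop (𝓝 0) := by
  obtain ⟨g, φ, hφ, hlim⟩ := exists_subseq_tendsto_on_rat F fun n => (hF n).2.2.1
  have hg : Monotone g := monotone_of_frequently_monotone_of_tendsto
    (.of_forall fun n => (hF (φ n)).1.comp Rat.cast_mono) hlim
  have hg01 : ∀ q, g q ∈ Icc (0 : ℝ) 1 := fun q =>
    isClosed_Icc.mem_of_tendsto (hlim q) (.of_forall fun n => (hF (φ n)).2.2.1 q)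
  have hg0 : g 0 = 0 := tendsto_nhds_unique (hlim 0) <| by
    simp [(hF _).2.2.2 0 le_rfl]
  have hbdd : BddAbove (range g) := ⟨1, forall_mem_range.2 fun q => (hg01 q).2⟩
  exact ⟨ratLeftLim g, isDDF_ratLeftLim hg hg01 hg0, φ, hφ,
    tendsto_dL_of_tendsto_rat (fun n => (hF (φ n)).1) hlim (fun _ _ => le_ratLeftLim hbdd)
      fun _ _ hxq => ratLeftLim_le hg hxq.le⟩

def DeltaPlus : Type := {F : ℝ → ℝ // IsDDF F}

noncomputable instance : PseudoMetricSpace DeltaPlus where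
  dist F G := dL F.1 G.1
  dist_self F := F.2.1.dL_self
  dist_comm F G := dL_comm F.1 G.1
  dist_triangle F G K := dL_triangle F.2.2.2.1 G.2.2.2.1 K.2.2.2.1

instance : CompactSpace DeltaPlus :=
  compactSpace_iff_seqCompactSpace.2 ⟨fun F _ =>
    let ⟨G, hG, φ, hφ, hlim⟩ := exists_subseq_tendsto_dL (fun n => (F n).1) fun n => (F n).2
    ⟨⟨G, hG⟩, mem_univ _, φ, hφ, tendsto_iff_dist_tendsto_zero.2 hlim⟩⟩

/-- The metric space `(Δ⁺, d_L)` is compact (every sequence of d.d.f.'s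
has a subsequence converging in `d_L` to a d.d.f.), and hence complete (every `d_L`-Cauchy
sequence of d.d.f.'s converges in `d_L` to a d.d.f.). -/
theorem DeltaPlus_compact_and_complete :
    (∀ F : ℕ → ℝ → ℝ, (∀ n, IsDDF (F n)) →
      ∃ G : ℝ → ℝ, IsDDF G ∧ ∃ φ : ℕ → ℕ, StrictMono φ ∧
        Filter.Tendsto (fun n => dL (F (φ n)) G) Filter.atTop (nhds 0)) ∧
    (∀ F : ℕ → ℝ → ℝ, (∀ n, IsDDF (F n)) →
      (∀ ε > (0 : ℝ), ∃ N : ℕ, ∀ m ≥ N, ∀ n ≥ N, dL (F m) (F n) < ε) →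
      ∃ G : ℝ → ℝ, IsDDF G ∧
        Filter.Tendsto (fun n => dL (F n) G) Filter.atTop (nhds 0)) := by
  refine ⟨exists_subseq_tendsto_dL, fun F hF hCauchy => ?_⟩
  let u : ℕ → DeltaPlus := fun n => ⟨F n, hF n⟩
  obtain ⟨G, hlim⟩ := cauchySeq_tendsto_of_complete (Metric.cauchySeq_iff.2 hCauchy : CauchySeq u)
  exact ⟨G.1, G.2, tendsto_iff_dist_tendsto_zero.1 hlim⟩
end

section
/- Let (S, 𝓕, τ) be a probabilistic metric space with τ continuous, and let E be a subset of S. The following are equivalent: (a) E is complete (every Cauchy sequence in E converges to a point of E) and probabilistic totally bounded; (b) (Bolzano–Weierstrass property) every sequence in E has a subsequence converging to a point of E; (c) (Heine–Borel property) every cover of E by sets open in the strong topology has a finite subcover. -/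
open Set Filter Topology

/-- A triangle function: a binary operation on `Δ⁺` that is commutative, associative,
nondecreasing in each argument, and has `H₀` as identity. -/
def IsTriangleFunction (τ : (ℝ → ℝ) → (ℝ → ℝ) → (ℝ → ℝ)) : Prop :=
  (∀ F G, IsDDF F → IsDDF G → IsDDF (τ F G)) ∧
  (∀ F G, IsDDF F → IsDDF G → τ F G = τ G F) ∧
  (∀ F G K, IsDDF F → IsDDF G → IsDDF K → τ (τ F G) K = τ F (τ G K)) ∧
  (∀ F G K, IsDDF F → IsDDF G → IsDDF K → F ≤ G → τ F K ≤ τ G K) ∧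
  (∀ F, IsDDF F → τ H0 F = F)

/-- Continuity of a triangle function with respect to the modified Lévy metric on `Δ⁺`
(sequential continuity, which is equivalent since `d_L` is a metric). -/
def ContinuousTF (τ : (ℝ → ℝ) → (ℝ → ℝ) → (ℝ → ℝ)) : Prop :=
  ∀ (F G : ℕ → ℝ → ℝ) (F₀ G₀ : ℝ → ℝ),
    (∀ n, IsDDF (F n)) → (∀ n, IsDDF (G n)) → IsDDF F₀ → IsDDF G₀ →
    Filter.Tendsto (fun n => dL (F n) F₀) Filter.atTop (nhds 0) →
    Filter.Tendsto (fun n => dL (G n) G₀) Filter.atTop (nhds 0) →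
    Filter.Tendsto (fun n => dL (τ (F n) (G n)) (τ F₀ G₀)) Filter.atTop (nhds 0)

/-- `(S, 𝓕, τ)` is a probabilistic metric space. -/
structure IsPMSpace {S : Type*} (𝓕 : S → S → ℝ → ℝ)
    (τ : (ℝ → ℝ) → (ℝ → ℝ) → (ℝ → ℝ)) : Prop where
  ddf : ∀ p q, IsDDF (𝓕 p q)
  tf : IsTriangleFunction τ
  refl : ∀ p, 𝓕 p p = H0
  ne : ∀ p q, p ≠ q → 𝓕 p q ≠ H0
  symm : ∀ p q, 𝓕 p q = 𝓕 q p
  tri : ∀ p q r, τ (𝓕 p q) (𝓕 q r) ≤ 𝓕 p r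

/-- The strong neighborhood `N_p(t) = {q : F_{p,q}(t) > 1 - t}`. -/
def Npt {S : Type*} (𝓕 : S → S → ℝ → ℝ) (p : S) (t : ℝ) : Set S :=
  {q | 1 - t < 𝓕 p q t}

/-- A set is open in the strong topology iff it contains a strong neighborhood
of each of its points. -/
def StrongOpen {S : Type*} (𝓕 : S → S → ℝ → ℝ) (U : Set S) : Prop :=
  ∀ p ∈ U, ∃ t > 0, Npt 𝓕 p t ⊆ U

/-- Convergence of a sequence in a PM space (the `(ε, λ)`-sense). -/
def PMConv {S : Type*} (𝓕 : S → S → ℝ → ℝ) (p : ℕ → S) (p₀ : S) : Prop :=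
  ∀ ε > (0 : ℝ), ∀ lam ∈ Set.Ioo (0 : ℝ) 1, ∃ n₀ : ℕ, ∀ n ≥ n₀, 1 - lam < 𝓕 (p n) p₀ ε

/-- Cauchy sequences in a PM space. -/
def PMCauchy {S : Type*} (𝓕 : S → S → ℝ → ℝ) (p : ℕ → S) : Prop :=
  ∀ ε > (0 : ℝ), ∀ lam ∈ Set.Ioo (0 : ℝ) 1, ∃ n₀ : ℕ, ∀ n ≥ n₀, ∀ m ≥ n₀,
    1 - lam < 𝓕 (p n) (p m) ε

/-!
For `t > 0` let `U_t = {(p, q) | F_{p,q}(t) > 1 - t}`. The triangle inequality and the continuity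
of `τ` at `(H₀, H₀)` give, for every `t`, some `η` with `U_η ∘ U_η ⊆ U_t`, so the `U_t` form a base
of a uniformity on `S`; it has the countable base `U_{1/(n+1)}` and is therefore pseudometrizable.
Its topology is the strong topology, and convergence, Cauchy sequences and probabilistic total
boundedness are the uniform notions. The three conditions are then the classical characterisations
of compactness in a pseudometrizable uniform space: complete and totally bounded, sequentially
compact, and every open cover has a finite subcover.
-/

open scoped SetRel Uniformity

theorem isComplete_iff_cauchySeq_tendsto {X : Type*} [UniformSpace X]
    [IsCountablyGenerated (𝓤 X)] {s : Set X} :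
    IsComplete s ↔
      ∀ u : ℕ → X, (∀ n, u n ∈ s) → CauchySeq u → ∃ a ∈ s, Tendsto u atTop (𝓝 a) := by
  refine ⟨fun h u hu huc => cauchySeq_tendsto_of_isComplete h hu huc, fun h => ?_⟩
  rw [← completeSpace_coe_iff_isComplete]
  refine UniformSpace.complete_of_cauchySeq_tendsto fun u hu => ?_
  obtain ⟨a, ha, hlim⟩ :=
    h _ (fun n => (u n).2) (uniformContinuous_subtype_val.comp_cauchySeq hu)
  exact ⟨⟨a, ha⟩, tendsto_subtype_rng.2 hlim⟩

theorem isCompact_iff_finite_subcover_sUnion {X : Type*} [TopologicalSpace X] {s : Set X} :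
    IsCompact s ↔ ∀ 𝒱 : Set (Set X), (∀ V ∈ 𝒱, IsOpen V) → s ⊆ ⋃₀ 𝒱 →
      ∃ 𝒲 : Finset (Set X), ↑𝒲 ⊆ 𝒱 ∧ s ⊆ ⋃₀ (↑𝒲 : Set (Set X)) := by
  refine ⟨fun hs 𝒱 hopen hcov => ?_, fun h => isCompact_generateFrom
    (TopologicalSpace.generateFrom_setOfPred_isOpen _).symm fun 𝒱 hopen hcov => ?_⟩
  · obtain ⟨𝒲, h𝒲, hfin, hcov'⟩ :=
      hs.elim_finite_subcover_image (c := id) hopen (by simpa [sUnion_eq_biUnion] using hcov)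
    exact ⟨hfin.toFinset, by simpa using h𝒲, by simpa [sUnion_eq_biUnion] using hcov'⟩
  · obtain ⟨𝒲, h𝒲, hcov'⟩ := h 𝒱 hopen hcov
    exact ⟨𝒲, h𝒲, 𝒲.finite_toSet, hcov'⟩

theorem forall_eventually_one_sub_lt_iff {α : Type*} {l : Filter α} {F : α → ℝ → ℝ}
    (hF : ∀ a, Monotone (F a)) :
    (∀ ε > (0 : ℝ), ∀ lam ∈ Ioo (0 : ℝ) 1, ∀ᶠ a in l, 1 - lam < F a ε) ↔
      ∀ t > (0 : ℝ), ∀ᶠ a in l, 1 - t < F a t := by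
  refine ⟨fun h t ht => ?_, fun h ε hε lam hlam => ?_⟩
  · filter_upwards [h t ht (min t (1 / 2))
      ⟨lt_min ht one_half_pos, (min_le_right _ _).trans_lt one_half_lt_one⟩] with a ha
    linarith [min_le_left t (1 / 2)]
  · filter_upwards [h _ (lt_min hε hlam.1)] with a ha
    linarith [min_le_right ε lam, hF a (min_le_left ε lam)]

theorem isDDF_H0 : IsDDF H0 := by
  refine ⟨fun a b hab => ?_, fun x => ?_, fun x => ?_, fun x hx => if_pos hx⟩
  · simp only [H0]
    split_ifs <;> grind
  · rcases le_or_gt x 0 with hx | hx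
    · exact continuousWithinAt_const.congr (fun y (hy : y < x) => if_pos (hy.le.trans hx))
        (if_pos hx)
    · have : (fun _ => (1 : ℝ)) =ᶠ[𝓝 x] H0 := by
        filter_upwards [Ioi_mem_nhds hx] with y hy
        exact (if_neg (not_le.2 hy)).symm
      exact (continuousAt_const.congr this).continuousWithinAt
  · simp only [H0]
    split_ifs <;> norm_num

namespace IsDDF

variable {F G : ℝ → ℝ}

theorem nonneg (hF : IsDDF F) (x : ℝ) : 0 ≤ F x := (hF.2.2.1 x).1

theorem le_one (hF : IsDDF F) (x : ℝ) : F x ≤ 1 := (hF.2.2.1 x).2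

theorem levyCond_one (hF : IsDDF F) (hG : IsDDF G) : LevyCond F G 1 := fun x _ =>
  ⟨by linarith [hF.le_one (x - 1), hG.nonneg x], by linarith [hG.le_one x, hF.nonneg (x + 1)]⟩

theorem levyCond_H0 (hF : IsDDF F) {t : ℝ} (ht : 0 < t) (hFt : 1 - t < F t) :
    LevyCond F H0 t ∧ LevyCond H0 F t := by
  have hF0 : ∀ x ≤ 0, F x = 0 := hF.2.2.2
  refine ⟨fun x _ => ⟨?_, ?_⟩, fun x _ => ⟨?_, ?_⟩⟩ <;> simp only [H0] <;> split_ifs with hx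
  · linarith [hF0 (x - t) (by linarith)]
  · linarith [hF.le_one (x - t)]
  · linarith [hF.nonneg (x + t)]
  · linarith [hF.1 (by linarith : t ≤ x + t)]
  · linarith [hF.nonneg x]
  · linarith [hF.1 (by linarith : t ≤ x)]
  · linarith [hF0 x (by linarith)]
  · linarith [hF.le_one x]

theorem dL_H0_le (hF : IsDDF F) {t : ℝ} (ht : 0 < t) (ht1 : t ≤ 1) (hFt : 1 - t < F t) :
    dL F H0 ≤ t :=
  csInf_le ⟨0, fun _ h => h.1.1.le⟩ ⟨⟨ht, ht1⟩, hF.levyCond_H0 ht hFt⟩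

theorem one_sub_lt_of_dL_H0_lt (hF : IsDDF F) {t : ℝ} (ht1 : t ≤ 1) (hdL : dL F H0 < t) :
    1 - t < F t := by
  unfold dL at hdL
  obtain ⟨h, ⟨⟨hh0, hh1⟩, -, hcond⟩, hht⟩ := exists_lt_of_csInf_lt
    (⟨1, ⟨zero_lt_one, le_rfl⟩, hF.levyCond_one isDDF_H0, isDDF_H0.levyCond_one hF⟩ :
      Set.Nonempty {h : ℝ | h ∈ Ioc 0 1 ∧ LevyCond F H0 h ∧ LevyCond H0 F h}) hdL
  have ht : t ∈ Ioo (-(1 / h)) (1 / h) :=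
    ⟨by linarith [one_div_pos.2 hh0], (lt_div_iff₀ hh0).2 (by nlinarith)⟩
  have := (hcond t ht).1
  simp only [H0, if_neg (by linarith : ¬ t - h ≤ 0)] at this
  linarith

end IsDDF

theorem tendsto_dL_H0 {F : ℕ → ℝ → ℝ} (hF : ∀ n, IsDDF (F n))
    (h : ∀ n : ℕ, 1 - 1 / ((n : ℝ) + 1) < F n (1 / ((n : ℝ) + 1))) :
    Tendsto (fun n => dL (F n) H0) atTop (𝓝 0) :=
  squeeze_zero (fun n => Real.sInf_nonneg fun _ hx => hx.1.1.le)
    (fun n => (hF n).dL_H0_le Nat.one_div_pos_of_nat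
      (div_le_one_of_le₀ (by simp) (by positivity)) (h n))
    tendsto_one_div_add_atTop_nhds_zero_nat

section StrongUniformity

variable {S : Type*} {𝓕 : S → S → ℝ → ℝ} {τ : (ℝ → ℝ) → (ℝ → ℝ) → (ℝ → ℝ)}

def strongEntourage (𝓕 : S → S → ℝ → ℝ) (t : ℝ) : SetRel S S :=
  {pq | 1 - t < 𝓕 pq.1 pq.2 t}

theorem strongEntourage_mono (hmono : ∀ p q, Monotone (𝓕 p q)) :
    Monotone (strongEntourage 𝓕) := fun s t hst pq hpq =>
  calc 1 - t ≤ 1 - s := by linarith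
    _ < 𝓕 pq.1 pq.2 s := hpq
    _ ≤ 𝓕 pq.1 pq.2 t := hmono _ _ hst

def strongUniformity (𝓕 : S → S → ℝ → ℝ) : Filter (S × S) :=
  ⨅ t > 0, 𝓟 (strongEntourage 𝓕 t)

theorem hasBasis_strongUniformity (hmono : ∀ p q, Monotone (𝓕 p q)) :
    (strongUniformity 𝓕).HasBasis (fun t : ℝ => 0 < t) (strongEntourage 𝓕) :=
  hasBasis_biInf_principal' (fun s hs t ht => ⟨min s t, lt_min hs ht,
    strongEntourage_mono hmono (min_le_left s t), strongEntourage_mono hmono (min_le_right s t)⟩)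
    ⟨1, one_pos⟩

namespace IsPMSpace

theorem monotone_apply (hPM : IsPMSpace 𝓕 τ) (p q : S) : Monotone (𝓕 p q) := (hPM.ddf p q).1

theorem mem_strongEntourage_self (hPM : IsPMSpace 𝓕 τ) {t : ℝ} (ht : 0 < t) (p : S) :
    (p, p) ∈ strongEntourage 𝓕 t := by
  show 1 - t < 𝓕 p p t
  rw [hPM.refl, H0, if_neg ht.not_ge]
  linarith

theorem swap_mem_strongEntourage (hPM : IsPMSpace 𝓕 τ) {t : ℝ} {p q : S}
    (h : (p, q) ∈ strongEntourage 𝓕 t) :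
    (q, p) ∈ strongEntourage 𝓕 t := by
  show 1 - t < 𝓕 q p t
  rwa [hPM.symm]

theorem exists_strongEntourage_comp_subset (hPM : IsPMSpace 𝓕 τ) (hτ : ContinuousTF τ) {t : ℝ}
    (ht : 0 < t) :
    ∃ η > 0, strongEntourage 𝓕 η ○ strongEntourage 𝓕 η ⊆ strongEntourage 𝓕 t := by
  wlog ht1 : t ≤ 1 generalizing t with H
  · obtain ⟨η, hη, hsub⟩ := H (lt_min ht one_pos) (min_le_right t 1)
    exact ⟨η, hη, hsub.trans (strongEntourage_mono hPM.monotone_apply (min_le_left t 1))⟩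
  by_contra! hcomp
  -- triangles `p, q, r` with `F_pq, F_qr → H₀` but `F_pr t ≤ 1 - t`
  choose pr hpr hnot using fun n : ℕ =>
    not_subset.1 (hcomp (1 / ((n : ℝ) + 1)) Nat.one_div_pos_of_nat)
  choose q hpq hqr using hpr
  have hlim := hτ _ _ H0 H0 (fun _ => hPM.ddf _ _) (fun _ => hPM.ddf _ _) isDDF_H0 isDDF_H0
    (tendsto_dL_H0 (fun _ => hPM.ddf _ _) hpq) (tendsto_dL_H0 (fun _ => hPM.ddf _ _) hqr)
  rw [hPM.tf.2.2.2.2 H0 isDDF_H0] at hlim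
  obtain ⟨n, hn⟩ := (hlim.eventually_lt_const ht).exists
  exact hnot n (((hPM.tf.1 _ _ (hPM.ddf _ _) (hPM.ddf _ _)).one_sub_lt_of_dL_H0_lt ht1 hn).trans_le
    (hPM.tri _ _ _ t))

abbrev strongUniformSpace (hPM : IsPMSpace 𝓕 τ) (hτ : ContinuousTF τ) : UniformSpace S :=
  have hB := hasBasis_strongUniformity hPM.monotone_apply
  .ofCore
    { uniformity := strongUniformity 𝓕
      refl := hB.ge_iff.2 fun _ ht =>
        SetRel.id_subset_iff.2 ⟨fun p => hPM.mem_strongEntourage_self ht p⟩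
      symm := (hB.tendsto_iff hB).2 fun _ ht => ⟨_, ht, fun _ => hPM.swap_mem_strongEntourage⟩
      comp := ((hB.lift' (monotone_id.relComp monotone_id)).le_basis_iff hB).2 fun _ ht =>
        hPM.exists_strongEntourage_comp_subset hτ ht }

end IsPMSpace

end StrongUniformity

namespace Filter.HasBasis

variable {S : Type*} [UniformSpace S] {𝓕 : S → S → ℝ → ℝ}

theorem tendsto_nhds_iff_pmConv
    (hU : (𝓤 S).HasBasis (fun t : ℝ => 0 < t) (strongEntourage 𝓕))
    (hmono : ∀ p q, Monotone (𝓕 p q)) {p : ℕ → S} {p₀ : S} :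
    Tendsto p atTop (𝓝 p₀) ↔ PMConv 𝓕 p p₀ := by
  simp only [PMConv, ← eventually_atTop]
  rw [(nhds_basis_uniformity hU).tendsto_right_iff]
  exact (forall_eventually_one_sub_lt_iff fun n => hmono (p n) p₀).symm

theorem cauchySeq_iff_pmCauchy
    (hU : (𝓤 S).HasBasis (fun t : ℝ => 0 < t) (strongEntourage 𝓕))
    (hmono : ∀ p q, Monotone (𝓕 p q)) {p : ℕ → S} :
    CauchySeq p ↔ PMCauchy 𝓕 p := by
  have hev (P : ℕ → ℕ → Prop) :
      (∃ n₀, ∀ n ≥ n₀, ∀ m ≥ n₀, P n m) ↔ ∀ᶠ nm : ℕ × ℕ in atTop, P nm.1 nm.2 :=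
    (eventually_atTop_prod_self' (p := fun nm => P nm.1 nm.2)).symm
  simp only [PMCauchy, hev]
  rw [cauchySeq_iff_tendsto, hU.tendsto_right_iff]
  exact (forall_eventually_one_sub_lt_iff fun nm : ℕ × ℕ => hmono (p nm.1) (p nm.2)).symm

theorem isOpen_iff_strongOpen
    (hU : (𝓤 S).HasBasis (fun t : ℝ => 0 < t) (strongEntourage 𝓕)) {V : Set S} :
    IsOpen V ↔ StrongOpen 𝓕 V := by
  simp only [isOpen_iff_mem_nhds, StrongOpen, (nhds_basis_uniformity' hU).mem_iff]
  rfl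

theorem totallyBounded_iff_pm
    (hU : (𝓤 S).HasBasis (fun t : ℝ => 0 < t) (strongEntourage 𝓕)) {s : Set S} :
    TotallyBounded s ↔ ∀ ε > 0, ∃ P : Finset S, ↑P ⊆ s ∧ s ⊆ ⋃ p ∈ P, Npt 𝓕 p ε := by
  have hU' := hU.comap Prod.swap
  rw [comap_swap_uniformity] at hU'
  refine ⟨fun h ε hε => ?_, fun h => hU'.totallyBounded_iff.2 fun ε hε => ?_⟩
  · obtain ⟨P, hPs, hPfin, hcov⟩ := totallyBounded_iff_subset.1 h _ (hU'.mem_of_mem hε)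
    exact ⟨hPfin.toFinset, by simpa using hPs, by simpa [Npt, strongEntourage] using hcov⟩
  · obtain ⟨P, -, hcov⟩ := h ε hε
    exact ⟨P, P.finite_toSet, hcov⟩

theorem isCountablyGenerated_of_strongEntourage
    (hU : (𝓤 S).HasBasis (fun t : ℝ => 0 < t) (strongEntourage 𝓕))
    (hmono : ∀ p q, Monotone (𝓕 p q)) : IsCountablyGenerated (𝓤 S) :=
  (hU.to_hasBasis (p' := fun _ : ℕ => True) (s' := fun n => strongEntourage 𝓕 (1 / ((n : ℝ) + 1)))
    (fun _ ht => let ⟨n, hn⟩ := exists_nat_one_div_lt ht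
      ⟨n, trivial, strongEntourage_mono hmono hn.le⟩)
    fun _ _ => ⟨_, Nat.one_div_pos_of_nat, subset_rfl⟩).isCountablyGenerated

end Filter.HasBasis

theorem heine_borel_pm_general {S : Type*}
    (𝓕 : S → S → ℝ → ℝ) (τ : (ℝ → ℝ) → (ℝ → ℝ) → (ℝ → ℝ))
    (hPM : IsPMSpace 𝓕 τ) (hτ : ContinuousTF τ) (E : Set S) :
    (((∀ p : ℕ → S, (∀ n, p n ∈ E) → PMCauchy 𝓕 p → ∃ p₀ ∈ E, PMConv 𝓕 p p₀) ∧
        (∀ ε > (0 : ℝ), ∃ P : Finset S, ↑P ⊆ E ∧ E ⊆ ⋃ p ∈ P, Npt 𝓕 p ε)) ↔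
      (∀ p : ℕ → S, (∀ n, p n ∈ E) →
        ∃ p₀ ∈ E, ∃ φ : ℕ → ℕ, StrictMono φ ∧ PMConv 𝓕 (p ∘ φ) p₀)) ∧
    ((∀ p : ℕ → S, (∀ n, p n ∈ E) →
        ∃ p₀ ∈ E, ∃ φ : ℕ → ℕ, StrictMono φ ∧ PMConv 𝓕 (p ∘ φ) p₀) ↔
      (∀ 𝒱 : Set (Set S), (∀ V ∈ 𝒱, StrongOpen 𝓕 V) → E ⊆ ⋃₀ 𝒱 →
        ∃ 𝒲 : Finset (Set S), ↑𝒲 ⊆ 𝒱 ∧ E ⊆ ⋃₀ (↑𝒲 : Set (Set S)))) := by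
  let _ := hPM.strongUniformSpace hτ
  have hU : (𝓤 S).HasBasis (fun t : ℝ => 0 < t) (strongEntourage 𝓕) :=
    hasBasis_strongUniformity hPM.monotone_apply
  have := hU.isCountablyGenerated_of_strongEntourage hPM.monotone_apply
  simp only [← hU.tendsto_nhds_iff_pmConv hPM.monotone_apply,
    ← hU.cauchySeq_iff_pmCauchy hPM.monotone_apply, ← hU.isOpen_iff_strongOpen,
    ← hU.totallyBounded_iff_pm, ← isComplete_iff_cauchySeq_tendsto,
    ← isCompact_iff_finite_subcover_sUnion]
  change ((IsComplete E ∧ TotallyBounded E) ↔ IsSeqCompact E) ∧ (IsSeqCompact E ↔ IsCompact E)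
  rw [← isCompact_iff_isSeqCompact, and_comm (a := IsComplete E),
    isCompact_iff_totallyBounded_isComplete]
  exact ⟨Iff.rfl, Iff.rfl⟩

/-- In a PM space with continuous triangle function, for a subset `E`
the following are equivalent: (a) `E` is complete and probabilistic totally bounded;
(b) every sequence in `E` has a subsequence converging to a point of `E`
(Bolzano–Weierstrass); (c) every cover of `E` by strongly open sets has a finite
subcover (Heine–Borel). -/
theorem heine_borel_pm {S : Type*} [Nonempty S]
    (𝓕 : S → S → ℝ → ℝ) (τ : (ℝ → ℝ) → (ℝ → ℝ) → (ℝ → ℝ))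
    (hPM : IsPMSpace 𝓕 τ) (hτ : ContinuousTF τ) (E : Set S) :
    (((∀ p : ℕ → S, (∀ n, p n ∈ E) → PMCauchy 𝓕 p → ∃ p₀ ∈ E, PMConv 𝓕 p p₀) ∧
        (∀ ε > (0 : ℝ), ∃ P : Finset S, ↑P ⊆ E ∧ E ⊆ ⋃ p ∈ P, Npt 𝓕 p ε)) ↔
      (∀ p : ℕ → S, (∀ n, p n ∈ E) →
        ∃ p₀ ∈ E, ∃ φ : ℕ → ℕ, StrictMono φ ∧ PMConv 𝓕 (p ∘ φ) p₀)) ∧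
    ((∀ p : ℕ → S, (∀ n, p n ∈ E) →
        ∃ p₀ ∈ E, ∃ φ : ℕ → ℕ, StrictMono φ ∧ PMConv 𝓕 (p ∘ φ) p₀) ↔
      (∀ 𝒱 : Set (Set S), (∀ V ∈ 𝒱, StrongOpen 𝓕 V) → E ⊆ ⋃₀ 𝒱 →
        ∃ 𝒲 : Finset (Set S), ↑𝒲 ⊆ 𝒱 ∧ E ⊆ ⋃₀ (↑𝒲 : Set (Set S)))) :=
  heine_borel_pm_general 𝓕 τ hPM hτ E
end
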